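/- arXiv:2404.09409 — 2 statements merged into one kernel-verified Lean document; each statement's English description precedes it below -/
import Mathlib

section
/- Consider the diluted mixed p-spin random hypergraph and assume λ > 1. There exists a constant C depending only on (α_p)_{2≤p≤Δ} such that for every vertex i ∈ [N] and every t ∈ ℤ_+, E|B_t(i)| ≤ C λ^t. -/
open MeasureTheory ProbabilityTheory Real Finset

noncomputable section

/-! ### Basic objects: spins, Hermite polynomials, Gaussian measures -/

/-- The `±1` spin value attached to a Boolean. -/
def spin (b : Bool) : ℝ := if b then 1 else -1

/-- Normalized Hermite polynomial `h_m = He_m / √(m!)`,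
orthonormal w.r.t. the standard Gaussian measure. -/
def hermiteFn (m : ℕ) (x : ℝ) : ℝ :=
  Polynomial.aeval x (Polynomial.hermite m) / Real.sqrt (Nat.factorial m)

/-- The law of a family of i.i.d. standard Gaussians over a finite index set. -/
def gaussianPi (ι : Type*) [Fintype ι] : Measure (ι → ℝ) :=
  Measure.pi fun _ => gaussianReal 0 1

instance (ι : Type*) [Fintype ι] : IsProbabilityMeasure (gaussianPi ι) := by
  unfold gaussianPi; infer_instance

/-- Tensorized normalized Hermite polynomial `h_n(x) = ∏_e h_{n_e}(x_e)`. -/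
def hermiteProd {ι : Type*} [Fintype ι] (n : ι → ℕ) (x : ι → ℝ) : ℝ :=
  ∏ e, hermiteFn (n e) (x e)

/-- Continuous perturbation `J(t) = e^{-t} J + √(1-e^{-2t}) J'` of the disorder. -/
def contPerturb {ι : Type*} (t : ℝ) (J J' : ι → ℝ) : ι → ℝ := fun e =>
  Real.exp (-t) * J e + Real.sqrt (1 - Real.exp (-2 * t)) * J' e

/-- Discrete perturbation `J(t)_e = B_e J_e + (1-B_e) J'_e` of the disorder. -/
def discPerturb {ι : Type*} (J J' : ι → ℝ) (B : ι → Bool) : ι → ℝ := fun e =>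
  if B e then J e else J' e

/-- Bernoulli measure on `Bool` with success probability `p`. -/
def berBool (p : ℝ) : Measure Bool :=
  ENNReal.ofReal p • Measure.dirac true + ENNReal.ofReal (1 - p) • Measure.dirac false

instance (p : ℝ) : IsFiniteMeasure (berBool p) := by
  constructor
  simp only [berBool, Measure.coe_add, Pi.add_apply, Measure.smul_apply, smul_eq_mul,
    Measure.dirac_apply' _ MeasurableSet.univ, Set.indicator_univ, Pi.one_apply, mul_one]
  exact ENNReal.add_lt_top.mpr ⟨ENNReal.ofReal_lt_top, ENNReal.ofReal_lt_top⟩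

/-- Product Gaussian measure for a pair `(J, J')` of independent disorders. -/
def pairGauss (ι : Type*) [Fintype ι] : Measure ((ι → ℝ) × (ι → ℝ)) :=
  (gaussianPi ι).prod (gaussianPi ι)

/-- Product Gaussian measure for a triple of independent disorders. -/
def tripleGauss (ι : Type*) [Fintype ι] : Measure ((ι → ℝ) × (ι → ℝ) × (ι → ℝ)) :=
  (gaussianPi ι).prod ((gaussianPi ι).prod (gaussianPi ι))

/-- Law of `(J, J', B)`: two independent Gaussian disorders together with i.i.d.
Bernoulli(`p`) variables. -/
def tripleGaussBer (ι : Type*) [Fintype ι] (p : ℝ) :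
    Measure ((ι → ℝ) × (ι → ℝ) × (ι → Bool)) :=
  (gaussianPi ι).prod ((gaussianPi ι).prod (Measure.pi fun _ => berBool p))

/-! ### Spin models on hypergraphs -/

variable {N : ℕ}

/-- `σ_e = ∏_{v ∈ e} σ_v`. -/
def sigEdge (σ : Fin N → Bool) (e : Finset (Fin N)) : ℝ := ∏ v ∈ e, spin (σ v)

/-- Hamiltonian `H_J(σ) = Σ_e ρ_{|e|}(J_e) σ_e` of the short-range model. -/
def ham (Edges : Finset (Finset (Fin N))) (ρ : ℕ → ℝ → ℝ)
    (J : Finset (Fin N) → ℝ) (σ : Fin N → Bool) : ℝ :=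
  ∑ e ∈ Edges, ρ e.card (J e) * sigEdge σ e

/-- Gibbs average of an observable `f` for the Hamiltonian `H` at inverse temperature `β`. -/
def gibbs (β : ℝ) (H : (Fin N → Bool) → ℝ) (f : (Fin N → Bool) → ℝ) : ℝ :=
  (∑ σ : Fin N → Bool, f σ * Real.exp (β * H σ)) / ∑ σ : Fin N → Bool, Real.exp (β * H σ)

/-- Gibbs average of a two-replica observable `f(σ,τ)` where `σ, τ` are sampled from the
product of the Gibbs measures of the Hamiltonians `H₁`, `H₂`. -/
def gibbs2 (β : ℝ) (H₁ H₂ : (Fin N → Bool) → ℝ)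
    (f : (Fin N → Bool) → (Fin N → Bool) → ℝ) : ℝ :=
  (∑ σ : Fin N → Bool, ∑ τ : Fin N → Bool, f σ τ * Real.exp (β * H₁ σ + β * H₂ τ)) /
    ∑ σ : Fin N → Bool, ∑ τ : Fin N → Bool, Real.exp (β * H₁ σ + β * H₂ τ)

/-- Site overlap `R(σ,τ) = N⁻¹ Σ_i σ_i τ_i`. -/
def overlap (σ τ : Fin N → Bool) : ℝ := (∑ i, spin (σ i) * spin (τ i)) / N

/-- Fourier–Hermite coefficient `φ̂_{ij}(n) = E[⟨σ_i σ_j⟩ h_n(J)]` of the two-point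
correlation function. -/
def twoPointCoeff (Edges : Finset (Finset (Fin N))) (ρ : ℕ → ℝ → ℝ) (β : ℝ)
    (i j : Fin N) (n : Finset (Fin N) → ℕ) : ℝ :=
  ∫ ω, gibbs β (ham Edges ρ ω) (fun σ => spin (σ i) * spin (σ j)) * hermiteProd n ω
    ∂gaussianPi (Finset (Fin N))

/-- `E(n) = {e : n_e > 0}`. -/
def Esupp (n : Finset (Fin N) → ℕ) : Finset (Finset (Fin N)) :=
  Finset.univ.filter fun e => n e ≠ 0

/-- `V(n)`: the vertices covered by `E(n)`. -/
def Vsupp (n : Finset (Fin N) → ℕ) : Finset (Fin N) :=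
  (Esupp n).biUnion id

/-- Disorder-averaged two-replica observable under the continuous perturbation:
`E ⟨f(σ,τ)⟩_t` with `σ ~ G_J`, `τ ~ G_{J(t)}`. -/
def contExp (Edges : Finset (Finset (Fin N))) (ρ : ℕ → ℝ → ℝ) (β t : ℝ)
    (f : (Fin N → Bool) → (Fin N → Bool) → ℝ) : ℝ :=
  ∫ ω : (Finset (Fin N) → ℝ) × (Finset (Fin N) → ℝ),
    gibbs2 β (ham Edges ρ ω.1) (ham Edges ρ (contPerturb t ω.1 ω.2)) f
    ∂pairGauss (Finset (Fin N))

/-- Disorder-averaged two-replica observable under the discrete perturbation. -/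
def discExp (Edges : Finset (Finset (Fin N))) (ρ : ℕ → ℝ → ℝ) (β t : ℝ)
    (f : (Fin N → Bool) → (Fin N → Bool) → ℝ) : ℝ :=
  ∫ ω : (Finset (Fin N) → ℝ) × (Finset (Fin N) → ℝ) × (Finset (Fin N) → Bool),
    gibbs2 β (ham Edges ρ ω.1) (ham Edges ρ (discPerturb ω.1 ω.2.1 ω.2.2)) f
    ∂tripleGaussBer (Finset (Fin N)) (Real.exp (-t))

/-! ### Berge paths, distance, balls, cycles -/

/-- `(vs, es)` is a Berge path of length `ℓ` from `v` to `w` in the hypergraph `Edges`. -/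
def IsBergePath (Edges : Finset (Finset (Fin N))) (ℓ : ℕ)
    (vs : Fin (ℓ + 1) → Fin N) (es : Fin ℓ → Finset (Fin N)) (v w : Fin N) : Prop :=
  Function.Injective vs ∧ Function.Injective es ∧ (∀ k, es k ∈ Edges) ∧
    vs 0 = v ∧ vs (Fin.last ℓ) = w ∧
    ∀ k : Fin ℓ, vs k.castSucc ∈ es k ∧ vs k.succ ∈ es k

/-- Hypergraph (Berge) distance between two vertices, `∞` if there is no path. -/
def hdist (Edges : Finset (Finset (Fin N))) (v w : Fin N) : ℕ∞ :=
  sInf {d : ℕ∞ | ∃ (ℓ : ℕ) (vs : Fin (ℓ + 1) → Fin N) (es : Fin ℓ → Finset (Fin N)),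
    IsBergePath Edges ℓ vs es v w ∧ d = (ℓ : ℕ∞)}

open scoped Classical in
/-- The closed ball `B_r(v)` in the hypergraph distance. -/
def hball (Edges : Finset (Finset (Fin N))) (v : Fin N) (r : ℕ) : Finset (Fin N) :=
  Finset.univ.filter fun w => hdist Edges v w ≤ (r : ℕ∞)

/-- The hypergraph `Edges` contains a Berge cycle. -/
def HasBergeCycle (Edges : Finset (Finset (Fin N))) : Prop :=
  ∃ (ℓ : ℕ) (vs : Fin ℓ → Fin N) (es : Fin ℓ → Finset (Fin N)),
    2 ≤ ℓ ∧ Function.Injective vs ∧ Function.Injective es ∧ (∀ k, es k ∈ Edges) ∧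
      ∀ k : Fin ℓ, vs k ∈ es k ∧ vs (finRotate ℓ k) ∈ es k

/-- `min(d, c)` where `d ∈ ℕ∞` and `c ∈ ℝ` (equal to `c` if `d = ∞`). -/
def truncMin (d : ℕ∞) (c : ℝ) : ℝ :=
  if d = ⊤ then c else min (d.toNat : ℝ) c

/-! ### The diluted mixed p-spin random hypergraph -/

/-- Probability that a given hyperedge is present in the diluted model. -/
def edgeProb (α : ℕ → ℝ) (Δ N : ℕ) (e : Finset (Fin N)) : ℝ :=
  if 2 ≤ e.card ∧ e.card ≤ Δ then α e.card * N / (N.choose e.card) else 0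

/-- The law of the diluted mixed `p`-spin random hypergraph: each hyperedge `e` with
`2 ≤ |e| ≤ Δ` is present independently with probability `α_{|e|} N / C(N,|e|)`. -/
def graphMeasure (α : ℕ → ℝ) (Δ N : ℕ) : Measure (Finset (Fin N) → Bool) :=
  Measure.pi fun e => berBool (edgeProb α Δ N e)

/-- The (random) hyperedge set determined by the indicator `g`. -/
def edgesOf {N : ℕ} (Δ : ℕ) (g : Finset (Fin N) → Bool) : Finset (Finset (Fin N)) :=
  Finset.univ.filter fun e => g e = true ∧ 2 ≤ e.card ∧ e.card ≤ Δ

/-- `λ = Σ_p p(p-1) α_p`. -/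
def lamMix (α : ℕ → ℝ) (Δ : ℕ) : ℝ :=
  ∑ p ∈ Finset.Icc 2 Δ, (p : ℝ) * ((p : ℝ) - 1) * α p

/-- `λ' = Σ_p p(p-1)(p-2) α_p`. -/
def lamMix' (α : ℕ → ℝ) (Δ : ℕ) : ℝ :=
  ∑ p ∈ Finset.Icc 2 Δ, (p : ℝ) * ((p : ℝ) - 1) * ((p : ℝ) - 2) * α p

/-- The exploration (breadth-first search) process `(R_t, I_t, S_t, E_t)` of a hypergraph
started at the vertex `i`. -/
def explore {N : ℕ} (Edges : Finset (Finset (Fin N))) (i : Fin N) :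
    ℕ → Finset (Fin N) × Finset (Fin N) × Finset (Fin N) × Finset (Finset (Fin N))
  | 0 => (∅, {i}, Finset.univ.erase i, ∅)
  | t + 1 =>
      let P := explore Edges i t
      let Enew := Edges.filter fun e => (e ∩ P.2.1).Nonempty ∧ e ∩ P.1 = ∅
      (P.1 ∪ P.2.1, Enew.biUnion fun e => e ∩ P.2.2.1,
        P.2.2.1 \ Enew.biUnion fun e => e ∩ P.2.2.1, Enew)

/-- The set `I_t` of newly explored vertices at step `t`. -/
def Iset {N : ℕ} (Edges : Finset (Finset (Fin N))) (i : Fin N) (t : ℕ) : Finset (Fin N) :=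
  (explore Edges i t).2.1

/-- Disorder-and-graph-averaged two-replica observable under the continuous perturbation
in the diluted model. -/
def dilContExp (α : ℕ → ℝ) (Δ N : ℕ) (ρ : ℕ → ℝ → ℝ) (β t : ℝ)
    (f : (Fin N → Bool) → (Fin N → Bool) → ℝ) : ℝ :=
  ∫ ω : (Finset (Fin N) → Bool) × (Finset (Fin N) → ℝ) × (Finset (Fin N) → ℝ),
    gibbs2 β (ham (edgesOf Δ ω.1) ρ ω.2.1)
      (ham (edgesOf Δ ω.1) ρ (contPerturb t ω.2.1 ω.2.2)) f
    ∂((graphMeasure α Δ N).prod (pairGauss (Finset (Fin N))))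

/-- Disorder-and-graph-averaged two-replica observable under the discrete perturbation
in the diluted model. -/
def dilDiscExp (α : ℕ → ℝ) (Δ N : ℕ) (ρ : ℕ → ℝ → ℝ) (β t : ℝ)
    (f : (Fin N → Bool) → (Fin N → Bool) → ℝ) : ℝ :=
  ∫ ω : (Finset (Fin N) → Bool) ×
      (Finset (Fin N) → ℝ) × (Finset (Fin N) → ℝ) × (Finset (Fin N) → Bool),
    gibbs2 β (ham (edgesOf Δ ω.1) ρ ω.2.1)
      (ham (edgesOf Δ ω.1) ρ (discPerturb ω.2.1 ω.2.2.1 ω.2.2.2)) f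
    ∂((graphMeasure α Δ N).prod (tripleGaussBer (Finset (Fin N)) (Real.exp (-t))))

/-! ### The Lévy model -/

/-- Hamiltonian of the Lévy model: `H(σ) = a_N⁻¹ Σ_{i,j} ρ(J_{ij}) σ_i σ_j`. -/
def levyHam (N : ℕ) (aN : ℝ) (ρ : ℝ → ℝ) (J : Fin N × Fin N → ℝ) (σ : Fin N → Bool) : ℝ :=
  (∑ p : Fin N × Fin N, ρ (J p) * (spin (σ p.1) * spin (σ p.2))) / aN

/-- The normalization `a_N = inf{x > 0 : P(|ρ(J)| > x) ≤ 1/N}`. -/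
def levyAN (ρ : ℝ → ℝ) (N : ℕ) : ℝ :=
  sInf {x : ℝ | 0 < x ∧ ((gaussianReal 0 1) {j | x < |ρ j|}).toReal ≤ 1 / N}

/-- The coupled free energy `F_N(t,λ)` of the Lévy model, with the two systems
perturbed by the Ornstein–Uhlenbeck flow at time `t`. -/
def levyF (N : ℕ) (β aN lam : ℝ) (ρ : ℝ → ℝ) (t : ℝ) : ℝ :=
  (∫ ω : (Fin N × Fin N → ℝ) × (Fin N × Fin N → ℝ) × (Fin N × Fin N → ℝ),
      Real.log (∑ σ : Fin N → Bool, ∑ τ : Fin N → Bool,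
        Real.exp (β * levyHam N aN ρ (fun p => Real.exp (-t / 2) * ω.1 p +
              Real.sqrt (1 - Real.exp (-t)) * ω.2.1 p) σ +
          β * levyHam N aN ρ (fun p => Real.exp (-t / 2) * ω.1 p +
              Real.sqrt (1 - Real.exp (-t)) * ω.2.2 p) τ +
          lam * N * overlap σ τ ^ 2))
    ∂tripleGauss (Fin N × Fin N)) / N

/-- The coupled free energy `F_N(∞,λ)`: the two systems carry independent disorders. -/
def levyFinf (N : ℕ) (β aN lam : ℝ) (ρ : ℝ → ℝ) : ℝ :=
  (∫ ω : (Fin N × Fin N → ℝ) × (Fin N × Fin N → ℝ) × (Fin N × Fin N → ℝ),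
      Real.log (∑ σ : Fin N → Bool, ∑ τ : Fin N → Bool,
        Real.exp (β * levyHam N aN ρ ω.2.1 σ + β * levyHam N aN ρ ω.2.2 τ +
          lam * N * overlap σ τ ^ 2))
    ∂tripleGauss (Fin N × Fin N)) / N

/-- `φ(t) = Σ_r E[L_r(J¹(t)) L_r(J²(t))]` where `J^i(t) = e^{-t/2} J + √(1-e^{-t}) J^i`. -/
def phiFn (k m : ℕ) (L : Fin m → (Fin k → ℝ) → ℝ) (t : ℝ) : ℝ :=
  ∑ r : Fin m, ∫ ω : (Fin k → ℝ) × (Fin k → ℝ) × (Fin k → ℝ),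
    L r (fun l => Real.exp (-t / 2) * ω.1 l + Real.sqrt (1 - Real.exp (-t)) * ω.2.1 l) *
      L r (fun l => Real.exp (-t / 2) * ω.1 l + Real.sqrt (1 - Real.exp (-t)) * ω.2.2 l)
    ∂tripleGauss (Fin k)

/-
A vertex at distance at most `t` from `i` is the endpoint of a Berge path from `i` of length
`ℓ ≤ t`, so `E|B_t(i)|` is at most the expected number of such paths. A path with distinct
hyperedges `e_1, …, e_ℓ` is present with probability `∏ P(e_k ∈ E)`. Forgetting that the
hyperedges are distinct, the sum factorizes over consecutive vertex pairs, and the hyperedges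
through two fixed distinct vertices carry total probability at most
`Σ_p C(N-2,p-2) α_p N / C(N,p) = λ/(N-1)`. There are at most `(N-1)^ℓ` vertex sequences from `i`,
so paths of length `ℓ` contribute at most `λ^ℓ`, and the geometric sum gives `C = λ/(λ-1)`.
-/

open scoped Classical

lemma berBool_singleton_true (p : ℝ) : berBool p {true} = ENNReal.ofReal p := by
  simp [berBool]

lemma isProbabilityMeasure_berBool {p : ℝ} (h0 : 0 ≤ p) (h1 : p ≤ 1) :
    IsProbabilityMeasure (berBool p) :=
  ⟨by simp [berBool, ← ENNReal.ofReal_add h0 (sub_nonneg.2 h1)]⟩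

lemma measureReal_pi_berBool_forall_true {ι : Type*} [Fintype ι] {p : ι → ℝ}
    (h0 : ∀ e, 0 ≤ p e) (h1 : ∀ e, p e ≤ 1) (s : Finset ι) :
    (Measure.pi fun e => berBool (p e)).real {g | ∀ e ∈ s, g e = true} = ∏ e ∈ s, p e := by
  have := fun e => isProbabilityMeasure_berBool (h0 e) (h1 e)
  have hpi : {g : ι → Bool | ∀ e ∈ s, g e = true} =
      Set.univ.pi fun e => if e ∈ s then {true} else Set.univ := by
    ext g
    simp only [Set.mem_ofPred_eq, Set.mem_univ_pi]
    refine forall_congr' fun e => ?_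
    split_ifs <;> simp [*]
  rw [hpi, measureReal_def, Measure.pi_pi, ENNReal.toReal_prod]
  trans ∏ e, if e ∈ s then p e else 1
  · refine prod_congr rfl fun e _ => ?_
    split_ifs
    · rw [berBool_singleton_true, ENNReal.toReal_ofReal (h0 e)]
    · rw [measure_univ, ENNReal.toReal_one]
  · rw [prod_ite_mem, univ_inter]

lemma card_filter_superset_card_eq {β : Type*} [Fintype β] (s : Finset β) {k : ℕ}
    (hk : #s ≤ k) :
    #{t : Finset β | s ⊆ t ∧ #t = k} = (Fintype.card β - #s).choose (k - #s) := by
  rw [← card_compl, ← card_powersetCard]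
  refine card_bij' (fun t _ => t \ s) (fun u _ => u ∪ s) (fun t ht => ?_) (fun u hu => ?_)
    (fun t ht => ?_) (fun u hu => ?_)
  · simp only [mem_filter, mem_univ, true_and, mem_powersetCard] at ht ⊢
    refine ⟨fun x hx => mem_compl.2 (mem_sdiff.1 hx).2, ?_⟩
    rw [card_sdiff_of_subset ht.1, ht.2]
  · simp only [mem_filter, mem_univ, true_and, mem_powersetCard] at hu ⊢
    refine ⟨subset_union_right, ?_⟩
    rw [card_union_of_disjoint (disjoint_of_subset_left hu.1 disjoint_compl_left), hu.2]
    omega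
  · exact sdiff_union_of_subset (mem_filter.1 ht).2.1
  · exact union_sdiff_cancel_right
      (disjoint_of_subset_left (mem_powersetCard.1 hu).1 disjoint_compl_left)

lemma card_filter_mem_mem_card_eq {N : ℕ} {v w : Fin N} (hvw : v ≠ w) {p : ℕ} (hp : 2 ≤ p) :
    #{e : Finset (Fin N) | v ∈ e ∧ w ∈ e ∧ #e = p} = (N - 2).choose (p - 2) := by
  have hvw2 : #{v, w} = 2 := card_pair hvw
  have := card_filter_superset_card_eq {v, w} (k := p) (hvw2 ▸ hp)
  rw [hvw2, Fintype.card_fin] at this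
  simpa only [insert_subset_iff, singleton_subset_iff, and_assoc] using this

lemma choose_sub_two_mul_div_choose_le {N p : ℕ} (hN : 2 ≤ N) (hp : 2 ≤ p) :
    ((N - 2).choose (p - 2) : ℝ) * (N / N.choose p) ≤ p * (p - 1) / (N - 1) := by
  have hN1 : (0 : ℝ) < N - 1 := by
    have : (2 : ℝ) ≤ N := by exact_mod_cast hN
    linarith
  have hp1 : (0 : ℝ) ≤ p * (p - 1) := by
    have : (2 : ℝ) ≤ p := by exact_mod_cast hp
    nlinarith
  rcases eq_or_ne (N.choose p) 0 with h | h
  · rw [h, Nat.cast_zero, div_zero, mul_zero]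
    positivity
  · have hmul : (N.choose p * p.choose 2 : ℝ) = N.choose 2 * (N - 2).choose (p - 2) := by
      exact_mod_cast Nat.choose_mul hp
    rw [Nat.cast_choose_two, Nat.cast_choose_two] at hmul
    have hc : (N.choose p : ℝ) ≠ 0 := by exact_mod_cast h
    apply le_of_eq
    field_simp
    linear_combination -2 * hmul

section EdgeProb

variable {α : ℕ → ℝ} {Δ N : ℕ}

lemma edgeProb_nonneg (hα : ∀ p, 2 ≤ p → p ≤ Δ → 0 ≤ α p) (e : Finset (Fin N)) :
    0 ≤ edgeProb α Δ N e := by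
  unfold edgeProb
  split_ifs with h
  · have := hα _ h.1 h.2
    positivity
  · exact le_rfl

lemma edgeProb_le_one (hchoose : ∀ p, 2 ≤ p → p ≤ Δ → α p * N ≤ (N.choose p : ℝ))
    (e : Finset (Fin N)) : edgeProb α Δ N e ≤ 1 := by
  unfold edgeProb
  split_ifs with h
  · exact div_le_one_of_le₀ (hchoose _ h.1 h.2) (Nat.cast_nonneg _)
  · exact zero_le_one

lemma isProbabilityMeasure_graphMeasure (hα : ∀ p, 2 ≤ p → p ≤ Δ → 0 ≤ α p)
    (hchoose : ∀ p, 2 ≤ p → p ≤ Δ → α p * N ≤ (N.choose p : ℝ)) :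
    IsProbabilityMeasure (graphMeasure α Δ N) := by
  have := fun e => isProbabilityMeasure_berBool (edgeProb_nonneg hα e) (edgeProb_le_one hchoose e)
  unfold graphMeasure
  infer_instance

lemma lamMix_nonneg (hα : ∀ p, 2 ≤ p → p ≤ Δ → 0 ≤ α p) : 0 ≤ lamMix α Δ := by
  refine sum_nonneg fun p hp => ?_
  obtain ⟨h2, hΔ⟩ := mem_Icc.1 hp
  have : (2 : ℝ) ≤ p := by exact_mod_cast h2
  exact mul_nonneg (by nlinarith) (hα p h2 hΔ)

lemma sum_edgeProb_mem_mem_le (hα : ∀ p, 2 ≤ p → p ≤ Δ → 0 ≤ α p) {v w : Fin N}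
    (hvw : v ≠ w) :
    ∑ e with v ∈ e ∧ w ∈ e, edgeProb α Δ N e ≤ lamMix α Δ / (N - 1) := by
  have hN : 2 ≤ N := by
    have := Fin.val_ne_of_ne hvw
    omega
  calc ∑ e with v ∈ e ∧ w ∈ e, edgeProb α Δ N e
      = ∑ p ∈ Icc 2 Δ, ∑ e with v ∈ e ∧ w ∈ e ∧ #e = p, edgeProb α Δ N e := by
        rw [← sum_filter_of_ne (p := fun e => #e ∈ Icc 2 Δ), ← sum_fiberwise_eq_sum_filter]
        · simp only [filter_filter, and_assoc]
        · intro e _ he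
          unfold edgeProb at he
          split_ifs at he with h
          exacts [mem_Icc.2 h, absurd rfl he]
    _ = ∑ p ∈ Icc 2 Δ, ((N - 2).choose (p - 2) : ℝ) * (N / N.choose p) * α p := by
        refine sum_congr rfl fun p hp => ?_
        obtain ⟨h2, hΔ⟩ := mem_Icc.1 hp
        have hval : ∀ e ∈ ({e | v ∈ e ∧ w ∈ e ∧ #e = p} : Finset (Finset (Fin N))),
            edgeProb α Δ N e = α p * N / N.choose p := fun e he => by
          rw [edgeProb, (mem_filter.1 he).2.2.2, if_pos ⟨h2, hΔ⟩]
        rw [sum_congr rfl hval, sum_const, card_filter_mem_mem_card_eq hvw h2, nsmul_eq_mul]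
        ring
    _ ≤ ∑ p ∈ Icc 2 Δ, p * (p - 1) / (N - 1) * α p := by
        refine sum_le_sum fun p hp => ?_
        obtain ⟨h2, hΔ⟩ := mem_Icc.1 hp
        exact mul_le_mul_of_nonneg_right (choose_sub_two_mul_div_choose_le hN h2) (hα p h2 hΔ)
    _ = lamMix α Δ / (N - 1) := by
        rw [lamMix, sum_div]
        exact sum_congr rfl fun p _ => by ring

end EdgeProb

section BergePaths

variable {N : ℕ}

def bergePaths (Edges : Finset (Finset (Fin N))) (i : Fin N) (ℓ : ℕ) :
    Finset ((Fin (ℓ + 1) → Fin N) × (Fin ℓ → Finset (Fin N))) :=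
  {q | IsBergePath Edges ℓ q.1 q.2 i (q.1 (Fin.last ℓ))}

lemma exists_isBergePath_of_hdist_le {Edges : Finset (Finset (Fin N))} {v w : Fin N} {t : ℕ}
    (h : hdist Edges v w ≤ t) : ∃ ℓ ≤ t, ∃ vs es, IsBergePath Edges ℓ vs es v w := by
  have hne : {d : ℕ∞ | ∃ ℓ vs es, IsBergePath Edges ℓ vs es v w ∧ d = ℓ}.Nonempty :=
    Set.nonempty_iff_ne_empty.2 fun hempty => by
      rw [hdist, hempty] at h
      simp at h
  obtain ⟨ℓ, vs, es, hpath, hℓ⟩ := csInf_mem hne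
  rw [hdist, hℓ, Nat.cast_le] at h
  exact ⟨ℓ, h, vs, es, hpath⟩

lemma hball_subset_biUnion_bergePaths (Edges : Finset (Finset (Fin N))) (i : Fin N) (t : ℕ) :
    hball Edges i t ⊆ (range (t + 1)).biUnion fun ℓ =>
      (bergePaths Edges i ℓ).image fun q => q.1 (Fin.last ℓ) := by
  intro w hw
  obtain ⟨ℓ, hℓ, vs, es, hpath⟩ := exists_isBergePath_of_hdist_le (mem_filter.1 hw).2
  have hlast : vs (Fin.last ℓ) = w := hpath.2.2.2.2.1
  refine mem_biUnion.2
    ⟨ℓ, mem_range.2 (Nat.lt_succ_of_le hℓ), mem_image.2 ⟨(vs, es), ?_, hlast⟩⟩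
  rw [← hlast] at hpath
  exact mem_filter.2 ⟨mem_univ _, hpath⟩

lemma card_hball_le_sum_card_bergePaths (Edges : Finset (Finset (Fin N))) (i : Fin N) (t : ℕ) :
    #(hball Edges i t) ≤ ∑ ℓ ∈ range (t + 1), #(bergePaths Edges i ℓ) :=
  (card_le_card (hball_subset_biUnion_bergePaths Edges i t)).trans
    (card_biUnion_le.trans (sum_le_sum fun _ _ => card_image_le))

lemma bergePaths_edgesOf (Δ : ℕ) (g : Finset (Fin N) → Bool) (i : Fin N) (ℓ : ℕ) :
    bergePaths (edgesOf Δ g) i ℓ =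
      {q ∈ bergePaths (edgesOf Δ fun _ => true) i ℓ | ∀ k, g (q.2 k) = true} := by
  ext q
  simp only [bergePaths, IsBergePath, edgesOf, mem_filter, mem_univ, true_and]
  constructor
  · rintro ⟨h1, h2, hE, h4⟩
    exact ⟨⟨h1, h2, fun k => (hE k).2, h4⟩, fun k => (hE k).1⟩
  · rintro ⟨⟨h1, h2, hE, h4⟩, hg⟩
    exact ⟨h1, h2, fun k => ⟨hg k, hE k⟩, h4⟩

lemma card_injective_fin_succ_le {β : Type*} [Fintype β] [DecidableEq β] (i : β) (ℓ : ℕ) :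
    #{vs : Fin (ℓ + 1) → β | Function.Injective vs ∧ vs 0 = i} ≤
      (Fintype.card β - 1) ^ ℓ := by
  calc #{vs : Fin (ℓ + 1) → β | Function.Injective vs ∧ vs 0 = i}
      ≤ #(Fintype.piFinset fun _ : Fin ℓ => univ.erase i) := by
        refine card_le_card_of_injOn Fin.tail (fun vs hvs => ?_) fun vs hvs vs' hvs' htail => ?_
        · obtain ⟨hinj, h0⟩ := (mem_filter.1 hvs).2
          simp only [mem_coe, Fintype.mem_piFinset, mem_erase, mem_univ, and_true]
          intro k hk
          exact Fin.succ_ne_zero k (hinj (hk.trans h0.symm))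
        · rw [← Fin.cons_self_tail vs, ← Fin.cons_self_tail vs', htail,
            (mem_filter.1 hvs).2.2, (mem_filter.1 hvs').2.2]
    _ = (Fintype.card β - 1) ^ ℓ := by simp [card_erase_of_mem]

end BergePaths

lemma pow_mul_div_pow_le {a x : ℝ} (ha : 0 ≤ a) (hx : 0 ≤ x) (n : ℕ) :
    a ^ n * (x / a) ^ n ≤ x ^ n := by
  rw [← mul_pow]
  refine pow_le_pow_left₀ (by positivity) ?_ n
  rcases ha.eq_or_lt with rfl | ha
  · rwa [zero_mul]
  · rw [mul_div_cancel₀ _ ha.ne']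

section ExpectedPaths

variable {α : ℕ → ℝ} {Δ N : ℕ}

lemma integral_card_bergePaths_edgesOf (hα : ∀ p, 2 ≤ p → p ≤ Δ → 0 ≤ α p)
    (hchoose : ∀ p, 2 ≤ p → p ≤ Δ → α p * N ≤ (N.choose p : ℝ))
    (i : Fin N) (ℓ : ℕ) :
    ∫ g, (#(bergePaths (edgesOf Δ g) i ℓ) : ℝ) ∂graphMeasure α Δ N =
      ∑ q ∈ bergePaths (edgesOf Δ fun _ => true) i ℓ, ∏ k, edgeProb α Δ N (q.2 k) := by
  have := isProbabilityMeasure_graphMeasure hα hchoose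
  have hcard : ∀ g : Finset (Fin N) → Bool, (#(bergePaths (edgesOf Δ g) i ℓ) : ℝ) =
      ∑ q ∈ bergePaths (edgesOf Δ fun _ => true) i ℓ,
        Set.indicator {g | ∀ e ∈ univ.image q.2, g e = true} 1 g := by
    intro g
    rw [bergePaths_edgesOf, card_filter, Nat.cast_sum]
    refine sum_congr rfl fun q _ => ?_
    simp [Set.indicator]
  rw [integral_congr_ae (Filter.Eventually.of_forall hcard),
    integral_finsetSum _ fun _ _ => Integrable.of_finite]
  refine sum_congr rfl fun q hq => ?_
  rw [integral_indicator_one MeasurableSet.of_discrete, graphMeasure,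
    measureReal_pi_berBool_forall_true (edgeProb_nonneg hα) (edgeProb_le_one hchoose),
    prod_image fun k _ k' _ h => (mem_filter.1 hq).2.2.1 h]

lemma sum_bergePaths_prod_edgeProb_le (hα : ∀ p, 2 ≤ p → p ≤ Δ → 0 ≤ α p)
    (Edges : Finset (Finset (Fin N))) (i : Fin N) (ℓ : ℕ) :
    ∑ q ∈ bergePaths Edges i ℓ, ∏ k, edgeProb α Δ N (q.2 k) ≤ lamMix α Δ ^ ℓ := by
  set A : Finset (Fin (ℓ + 1) → Fin N) := {vs | Function.Injective vs ∧ vs 0 = i}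
  set E : (Fin (ℓ + 1) → Fin N) → Fin ℓ → Finset (Finset (Fin N)) :=
    fun vs k => {e | vs k.castSucc ∈ e ∧ vs k.succ ∈ e}
  set S : Finset ((Fin (ℓ + 1) → Fin N) × (Fin ℓ → Finset (Fin N))) :=
    {q | q.1 ∈ A ∧ q.2 ∈ Fintype.piFinset (E q.1)}
  set L := lamMix α Δ / (N - 1)
  have hN : (1 : ℝ) ≤ N := by exact_mod_cast i.pos
  have hL : 0 ≤ L := div_nonneg (lamMix_nonneg hα) (by linarith)
  have hsub : bergePaths Edges i ℓ ⊆ S := by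
    intro q hq
    obtain ⟨hvs, -, -, h0, -, hinc⟩ := (mem_filter.1 hq).2
    simp [S, A, E, hvs, h0, hinc]
  have hpair : ∀ vs ∈ A, ∀ k, ∑ e ∈ E vs k, edgeProb α Δ N e ≤ L := fun vs hvs k =>
    sum_edgeProb_mem_mem_le hα
      ((mem_filter.1 hvs).2.1.ne (Fin.castSucc_lt_succ (i := k)).ne)
  have hA : (#A : ℝ) ≤ (N - 1) ^ ℓ := by
    have := card_injective_fin_succ_le i ℓ
    rw [Fintype.card_fin] at this
    calc (#A : ℝ) ≤ ((N - 1) ^ ℓ : ℕ) := by exact_mod_cast this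
      _ = (N - 1) ^ ℓ := by rw [Nat.cast_pow, Nat.cast_sub i.pos, Nat.cast_one]
  calc ∑ q ∈ bergePaths Edges i ℓ, ∏ k, edgeProb α Δ N (q.2 k)
      ≤ ∑ q ∈ S, ∏ k, edgeProb α Δ N (q.2 k) :=
        sum_le_sum_of_subset_of_nonneg hsub fun q _ _ =>
          prod_nonneg fun k _ => edgeProb_nonneg hα _
    _ = ∑ vs ∈ A, ∏ k, ∑ e ∈ E vs k, edgeProb α Δ N e := by
        rw [sum_finset_product S A (fun vs => Fintype.piFinset (E vs)) (by simp [S])]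
        simp_rw [prod_univ_sum]
    _ ≤ ∑ vs ∈ A, L ^ ℓ := by
        refine sum_le_sum fun vs hvs => ?_
        calc ∏ k, ∑ e ∈ E vs k, edgeProb α Δ N e ≤ ∏ _k : Fin ℓ, L :=
              prod_le_prod (fun k _ => sum_nonneg fun e _ => edgeProb_nonneg hα e)
                fun k _ => hpair vs hvs k
          _ = L ^ ℓ := by rw [prod_const, card_univ, Fintype.card_fin]
    _ = #A * L ^ ℓ := by rw [sum_const, nsmul_eq_mul]
    _ ≤ (N - 1) ^ ℓ * L ^ ℓ := mul_le_mul_of_nonneg_right hA (pow_nonneg hL ℓ)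
    _ ≤ lamMix α Δ ^ ℓ := pow_mul_div_pow_le (by linarith) (lamMix_nonneg hα) ℓ

end ExpectedPaths

lemma geom_sum_range_succ_le {x : ℝ} (hx : 1 < x) (t : ℕ) :
    ∑ ℓ ∈ range (t + 1), x ^ ℓ ≤ x / (x - 1) * x ^ t := by
  have hx1 : 0 < x - 1 := by linarith
  rw [geom_sum_eq hx.ne', div_mul_eq_mul_div, ← pow_succ']
  gcongr
  linarith

theorem stmt11_general (Δ : ℕ) (α : ℕ → ℝ)
    (hα : ∀ p, 2 ≤ p → p ≤ Δ → 0 < α p) (hlam : 1 < lamMix α Δ) :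
    ∃ C > 0, ∀ N : ℕ, 1 ≤ N →
      (∀ p, 2 ≤ p → p ≤ Δ → α p * N ≤ (N.choose p : ℝ)) →
      ∀ (i : Fin N) (t : ℕ),
        (∫ g, ((hball (edgesOf Δ g) i t).card : ℝ) ∂graphMeasure α Δ N)
          ≤ C * lamMix α Δ ^ t := by
  refine ⟨lamMix α Δ / (lamMix α Δ - 1), div_pos (by linarith) (by linarith),
    fun N _ hchoose i t => ?_⟩
  have hα₀ : ∀ p, 2 ≤ p → p ≤ Δ → 0 ≤ α p := fun p h2 hΔ => (hα p h2 hΔ).le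
  have := isProbabilityMeasure_graphMeasure hα₀ hchoose
  calc ∫ g, (#(hball (edgesOf Δ g) i t) : ℝ) ∂graphMeasure α Δ N
      ≤ ∫ g, ∑ ℓ ∈ range (t + 1), (#(bergePaths (edgesOf Δ g) i ℓ) : ℝ)
          ∂graphMeasure α Δ N :=
        integral_mono Integrable.of_finite Integrable.of_finite fun g => by
          rw [← Nat.cast_sum]
          exact Nat.cast_le.2 (card_hball_le_sum_card_bergePaths (edgesOf Δ g) i t)
    _ = ∑ ℓ ∈ range (t + 1),
          ∫ g, (#(bergePaths (edgesOf Δ g) i ℓ) : ℝ) ∂graphMeasure α Δ N :=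
        integral_finsetSum _ fun _ _ => Integrable.of_finite
    _ ≤ ∑ ℓ ∈ range (t + 1), lamMix α Δ ^ ℓ := sum_le_sum fun ℓ _ => by
        rw [integral_card_bergePaths_edgesOf hα₀ hchoose]
        exact sum_bergePaths_prod_edgeProb_le hα₀ _ i ℓ
    _ ≤ lamMix α Δ / (lamMix α Δ - 1) * lamMix α Δ ^ t := geom_sum_range_succ_le hlam t

/-- Volume growth of the diluted mixed `p`-spin random hypergraph: if
`λ > 1`, there is a constant `C = C((α_p))` such that `E|B_t(i)| ≤ C λ^t` for every vertex
`i` and every `t ∈ ℤ₊`. -/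
theorem stmt11 (Δ : ℕ) (hΔ : 2 ≤ Δ) (α : ℕ → ℝ)
    (hα : ∀ p, 2 ≤ p → p ≤ Δ → 0 < α p) (hlam : 1 < lamMix α Δ) :
    ∃ C > 0, ∀ N : ℕ, 1 ≤ N →
      (∀ p, 2 ≤ p → p ≤ Δ → α p * N ≤ (N.choose p : ℝ)) →
      ∀ (i : Fin N) (t : ℕ),
        (∫ g, ((hball (edgesOf Δ g) i t).card : ℝ) ∂graphMeasure α Δ N)
          ≤ C * lamMix α Δ ^ t :=
  stmt11_general Δ α hα hlam
end
end

section
/- Let k ≥ 1, let J be a standard Gaussian vector in ℝ^k, J¹ and J² independent copies of J, and for t ≥ 0 set J^i(t) = e^{−t/2}J + √(1−e^{−t})J^i for i = 1, 2. Let m ≥ 1 and L_1, …, L_m : ℝ^k → ℝ be measurable functions with max_{1≤r≤m} E[L_r(J)²] < ∞, and define φ(t) = Σ_{r=1}^m E[L_r(J¹(t)) · L_r(J²(t))]. Then for all 0 ≤ s ≤ t, one has 0 ≤ φ(t) ≤ φ(s). -/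
open MeasureTheory ProbabilityTheory Real Finset

noncomputable section

/-! ### Spin models on hypergraphs -/

variable {N : ℕ}

/-! With `ρ = e^{-t/2}`, the vectors `J¹(t)` and `J²(t)` are conditionally independent given `J`,
each distributed as `ρ x + √(1-ρ²) Y` given `J = x`. Hence `φ(t) = Σ_r ‖P_ρ L_r‖²` in
`L²(γ)`, where `P_ρ f(x) = E f(ρ x + √(1-ρ²) Y)` is the Mehler operator, so `φ(t) ≥ 0`.
Stability of the Gaussian law (`a X + b Y ∼ √(a²+b²) X`) gives the semigroup law
`P_{ca} = P_c ∘ P_a`, and each `P_c` is an `L²(γ)` contraction by Jensen's inequality and the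
invariance of `γ` under `(x, y) ↦ c x + √(1-c²) y`; thus `‖P_ρ f‖` decreases with `t`. -/

open scoped NNReal

lemma MeasureTheory.MeasurePreserving.integral_comp_of_aestronglyMeasurable
    {α β : Type*} [MeasurableSpace α] [MeasurableSpace β] {μ : Measure α} {ν : Measure β}
    {T : α → β} (hT : MeasurePreserving T μ ν) {g : β → ℝ} (hg : AEStronglyMeasurable g ν) :
    ∫ x, g (T x) ∂μ = ∫ y, g y ∂ν := by
  rw [← hT.map_eq] at hg ⊢
  exact (integral_map hT.measurable.aemeasurable hg).symm

lemma sq_integral_le_integral_sq {Ω : Type*} [MeasurableSpace Ω] {μ : Measure Ω}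
    [IsProbabilityMeasure μ] {X : Ω → ℝ} (hX : MemLp X 2 μ) :
    (∫ ω, X ω ∂μ) ^ 2 ≤ ∫ ω, X ω ^ 2 ∂μ := by
  have h := variance_nonneg X μ
  rw [variance_eq_sub hX] at h
  simp only [Pi.pow_apply] at h
  linarith

section GaussianLinearComb

variable {ι : Type*} [Fintype ι]

lemma measurePreserving_linearComb_gaussianReal {a b : ℝ} {v : ℝ≥0} (h : a ^ 2 + b ^ 2 = v) :
    MeasurePreserving (fun p : ℝ × ℝ => a * p.1 + b * p.2)
      ((gaussianReal 0 1).prod (gaussianReal 0 1)) (gaussianReal 0 v) := by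
  refine ⟨by fun_prop, ?_⟩
  have hcomb : (fun p : ℝ × ℝ => a * p.1 + b * p.2) =
      (fun p : ℝ × ℝ => p.1 + p.2) ∘ Prod.map (a * ·) (b * ·) := rfl
  rw [hcomb, ← Measure.map_map (by fun_prop) (by fun_prop),
    ← Measure.map_prod_map _ _ (by fun_prop) (by fun_prop), gaussianReal_map_const_mul,
    gaussianReal_map_const_mul]
  change Measure.conv _ _ = _
  rw [gaussianReal_conv_gaussianReal]
  congr 1
  · simp
  · ext; simp [h]

lemma measurePreserving_const_mul_gaussianReal {c : ℝ} {v : ℝ≥0} (h : c ^ 2 = v) :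
    MeasurePreserving (fun x : ℝ => c * x) (gaussianReal 0 1) (gaussianReal 0 v) := by
  refine ⟨by fun_prop, ?_⟩
  rw [gaussianReal_map_const_mul]
  congr 1
  · simp
  · ext; simp [h]

lemma measurePreserving_linearComb_gaussianPi {a b : ℝ} {v : ℝ≥0} (h : a ^ 2 + b ^ 2 = v) :
    MeasurePreserving (fun p : (ι → ℝ) × (ι → ℝ) => a • p.1 + b • p.2)
      ((gaussianPi ι).prod (gaussianPi ι)) (Measure.pi fun _ : ι => gaussianReal 0 v) :=
  (measurePreserving_pi _ _ fun _ => measurePreserving_linearComb_gaussianReal h).comp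
    ((measurePreserving_arrowProdEquivProdArrow ℝ ℝ ι _ _).symm _)

lemma measurePreserving_smul_gaussianPi {c : ℝ} {v : ℝ≥0} (h : c ^ 2 = v) :
    MeasurePreserving (fun x : ι → ℝ => c • x) (gaussianPi ι)
      (Measure.pi fun _ : ι => gaussianReal 0 v) :=
  measurePreserving_pi _ _ fun _ => measurePreserving_const_mul_gaussianReal h

lemma sq_add_sq_sqrt_one_sub_sq {ρ : ℝ} (hρ : ρ ^ 2 ≤ 1) : ρ ^ 2 + √(1 - ρ ^ 2) ^ 2 = 1 := by
  rw [Real.sq_sqrt (by linarith)]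
  ring

lemma measurePreserving_linearComb_sqrt_gaussianPi {ρ : ℝ} (hρ : ρ ^ 2 ≤ 1) :
    MeasurePreserving (fun p : (ι → ℝ) × (ι → ℝ) => ρ • p.1 + √(1 - ρ ^ 2) • p.2)
      ((gaussianPi ι).prod (gaussianPi ι)) (gaussianPi ι) :=
  measurePreserving_linearComb_gaussianPi (v := 1) (by rw [NNReal.coe_one]; exact sq_add_sq_sqrt_one_sub_sq hρ)

variable {g : (ι → ℝ) → ℝ} {a b c : ℝ}

lemma integral_comp_linearComb_gaussianPi (hg : Measurable g) (h : a ^ 2 + b ^ 2 = c ^ 2) :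
    ∫ p, g (a • p.1 + b • p.2) ∂(gaussianPi ι).prod (gaussianPi ι) =
      ∫ w, g (c • w) ∂gaussianPi ι := by
  have hv : a ^ 2 + b ^ 2 = ((c ^ 2).toNNReal : ℝ) := by rw [h, Real.coe_toNNReal _ (sq_nonneg c)]
  rw [(measurePreserving_linearComb_gaussianPi hv).integral_comp_of_aestronglyMeasurable
      hg.aestronglyMeasurable,
    (measurePreserving_smul_gaussianPi (Real.coe_toNNReal _ (sq_nonneg c)).symm).integral_comp_of_aestronglyMeasurable
      hg.aestronglyMeasurable]

lemma integrable_comp_linearComb_gaussianPi_iff (hg : Measurable g)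
    (h : a ^ 2 + b ^ 2 = c ^ 2) :
    Integrable (fun p => g (a • p.1 + b • p.2)) ((gaussianPi ι).prod (gaussianPi ι)) ↔
      Integrable (fun w => g (c • w)) (gaussianPi ι) := by
  have hv : a ^ 2 + b ^ 2 = ((c ^ 2).toNNReal : ℝ) := by rw [h, Real.coe_toNNReal _ (sq_nonneg c)]
  exact ((measurePreserving_linearComb_gaussianPi hv).integrable_comp
      hg.aestronglyMeasurable).trans
    ((measurePreserving_smul_gaussianPi (Real.coe_toNNReal _ (sq_nonneg c)).symm).integrable_comp
      hg.aestronglyMeasurable).symm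

end GaussianLinearComb

section Mehler

variable {ι : Type*} [Fintype ι]

def mehler (ρ : ℝ) (f : (ι → ℝ) → ℝ) (x : ι → ℝ) : ℝ :=
  ∫ y, f (ρ • x + √(1 - ρ ^ 2) • y) ∂gaussianPi ι

variable {f : (ι → ℝ) → ℝ}

lemma measurable_mehler (hf : Measurable f) (ρ : ℝ) : Measurable (mehler ρ f) :=
  (hf.comp (by fun_prop : Measurable fun p : (ι → ℝ) × (ι → ℝ) =>
    ρ • p.1 + √(1 - ρ ^ 2) • p.2)).stronglyMeasurable.integral_prod_right'.measurable

lemma integral_mul_comp_eq_integral_sq_mehler (hf : MemLp f 2 (gaussianPi ι)) {ρ : ℝ}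
    (hρ : ρ ^ 2 ≤ 1) :
    ∫ ω, f (ρ • ω.1 + √(1 - ρ ^ 2) • ω.2.1) * f (ρ • ω.1 + √(1 - ρ ^ 2) • ω.2.2)
        ∂tripleGauss ι =
      ∫ x, mehler ρ f x ^ 2 ∂gaussianPi ι := by
  have hcomb := measurePreserving_linearComb_sqrt_gaussianPi (ι := ι) hρ
  have h₁ : MemLp (fun ω : (ι → ℝ) × (ι → ℝ) × (ι → ℝ) => f (ρ • ω.1 + √(1 - ρ ^ 2) • ω.2.1)) 2
      (tripleGauss ι) :=
    hf.comp_measurePreserving (hcomb.comp ((MeasurePreserving.id _).prod measurePreserving_fst))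
  have h₂ : MemLp (fun ω : (ι → ℝ) × (ι → ℝ) × (ι → ℝ) => f (ρ • ω.1 + √(1 - ρ ^ 2) • ω.2.2)) 2
      (tripleGauss ι) :=
    hf.comp_measurePreserving (hcomb.comp ((MeasurePreserving.id _).prod measurePreserving_snd))
  have hint : Integrable (fun ω : (ι → ℝ) × (ι → ℝ) × (ι → ℝ) =>
      f (ρ • ω.1 + √(1 - ρ ^ 2) • ω.2.1) * f (ρ • ω.1 + √(1 - ρ ^ 2) • ω.2.2)) (tripleGauss ι) :=
    h₁.integrable_mul h₂
  rw [tripleGauss] at hint ⊢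
  rw [integral_prod _ hint]
  refine integral_congr_ae (ae_of_all _ fun x => ?_)
  exact (integral_prod_mul (fun y => f (ρ • x + √(1 - ρ ^ 2) • y))
    (fun y => f (ρ • x + √(1 - ρ ^ 2) • y))).trans (sq _).symm

variable {c : ℝ}

lemma integrable_sq_comp_linearComb_sqrt (hf : MemLp f 2 (gaussianPi ι)) (hc : c ^ 2 ≤ 1) :
    Integrable (fun p : (ι → ℝ) × (ι → ℝ) => f (c • p.1 + √(1 - c ^ 2) • p.2) ^ 2)
      ((gaussianPi ι).prod (gaussianPi ι)) :=
  (hf.comp_measurePreserving (measurePreserving_linearComb_sqrt_gaussianPi hc)).integrable_sq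

lemma ae_sq_mehler_le (hf : Measurable f) (hf2 : MemLp f 2 (gaussianPi ι)) (hc : c ^ 2 ≤ 1) :
    ∀ᵐ x ∂gaussianPi ι, mehler c f x ^ 2 ≤ ∫ y, f (c • x + √(1 - c ^ 2) • y) ^ 2 ∂gaussianPi ι := by
  filter_upwards [(integrable_sq_comp_linearComb_sqrt hf2 hc).prod_right_ae] with x hx
  exact sq_integral_le_integral_sq
    ((memLp_two_iff_integrable_sq (by fun_prop : Measurable fun y =>
      f (c • x + √(1 - c ^ 2) • y)).aestronglyMeasurable).2 hx)

lemma memLp_mehler (hf : Measurable f) (hf2 : MemLp f 2 (gaussianPi ι)) (hc : c ^ 2 ≤ 1) :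
    MemLp (mehler c f) 2 (gaussianPi ι) := by
  refine (memLp_two_iff_integrable_sq (measurable_mehler hf c).aestronglyMeasurable).2
    ((integrable_sq_comp_linearComb_sqrt hf2 hc).integral_prod_left.mono'
      ((measurable_mehler hf c).pow_const 2).aestronglyMeasurable ?_)
  filter_upwards [ae_sq_mehler_le hf hf2 hc] with x hx
  rwa [Real.norm_eq_abs, abs_of_nonneg (sq_nonneg _)]

lemma integral_sq_mehler_le (hf : Measurable f) (hf2 : MemLp f 2 (gaussianPi ι))
    (hc : c ^ 2 ≤ 1) :
    ∫ x, mehler c f x ^ 2 ∂gaussianPi ι ≤ ∫ x, f x ^ 2 ∂gaussianPi ι := by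
  have hF := integrable_sq_comp_linearComb_sqrt hf2 hc
  calc ∫ x, mehler c f x ^ 2 ∂gaussianPi ι
      ≤ ∫ x, ∫ y, f (c • x + √(1 - c ^ 2) • y) ^ 2 ∂gaussianPi ι ∂gaussianPi ι :=
        integral_mono_ae (memLp_mehler hf hf2 hc).integrable_sq hF.integral_prod_left
          (ae_sq_mehler_le hf hf2 hc)
    _ = ∫ p, f (c • p.1 + √(1 - c ^ 2) • p.2) ^ 2 ∂(gaussianPi ι).prod (gaussianPi ι) :=
        (integral_prod _ hF).symm
    _ = ∫ x, f x ^ 2 ∂gaussianPi ι :=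
        (measurePreserving_linearComb_sqrt_gaussianPi hc).integral_comp_of_aestronglyMeasurable
          (g := fun x => f x ^ 2) (hf.pow_const 2).aestronglyMeasurable

lemma mehler_mul_ae_eq (hf : Measurable f) (hfi : Integrable f (gaussianPi ι)) {a : ℝ}
    (ha : a ^ 2 ≤ 1) (hc : c ^ 2 ≤ 1) :
    mehler (c * a) f =ᵐ[gaussianPi ι] mehler c (mehler a f) := by
  have hca : (c * a) ^ 2 ≤ 1 := by rw [mul_pow]; nlinarith [sq_nonneg c, sq_nonneg a]
  have hvar : (a * √(1 - c ^ 2)) ^ 2 + √(1 - a ^ 2) ^ 2 = √(1 - (c * a) ^ 2) ^ 2 := by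
    rw [mul_pow, Real.sq_sqrt (by linarith), Real.sq_sqrt (by linarith),
      Real.sq_sqrt (by linarith)]
    ring
  have hF := (measurePreserving_linearComb_sqrt_gaussianPi hca).integrable_comp_of_integrable hfi
  filter_upwards [hF.prod_right_ae] with x hx
  have hshift : Measurable fun w => f ((c * a) • x + w) := by fun_prop
  have hxy : Integrable (fun p : (ι → ℝ) × (ι → ℝ) =>
      f ((c * a) • x + ((a * √(1 - c ^ 2)) • p.1 + √(1 - a ^ 2) • p.2)))
      ((gaussianPi ι).prod (gaussianPi ι)) :=
    (integrable_comp_linearComb_gaussianPi_iff hshift hvar).2 hx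
  calc mehler (c * a) f x
      = ∫ p, f ((c * a) • x + ((a * √(1 - c ^ 2)) • p.1 + √(1 - a ^ 2) • p.2))
          ∂(gaussianPi ι).prod (gaussianPi ι) :=
        (integral_comp_linearComb_gaussianPi hshift hvar).symm
    _ = mehler c (mehler a f) x := by
        rw [integral_prod _ hxy]
        refine integral_congr_ae (ae_of_all _ fun z => integral_congr_ae (ae_of_all _ fun y => ?_))
        simp only
        congr 1
        ext l
        simp only [Pi.add_apply, Pi.smul_apply, smul_eq_mul]
        ring

lemma integral_sq_mehler_mul_le (hf : Measurable f) (hf2 : MemLp f 2 (gaussianPi ι)) {a : ℝ}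
    (ha : a ^ 2 ≤ 1) (hc : c ^ 2 ≤ 1) :
    ∫ x, mehler (c * a) f x ^ 2 ∂gaussianPi ι ≤ ∫ x, mehler a f x ^ 2 ∂gaussianPi ι := by
  calc ∫ x, mehler (c * a) f x ^ 2 ∂gaussianPi ι
      = ∫ x, mehler c (mehler a f) x ^ 2 ∂gaussianPi ι := by
        refine integral_congr_ae ?_
        filter_upwards [mehler_mul_ae_eq hf (hf2.integrable one_le_two) ha hc] with x hx
        rw [hx]
    _ ≤ ∫ x, mehler a f x ^ 2 ∂gaussianPi ι :=
        integral_sq_mehler_le (measurable_mehler hf a) (memLp_mehler hf hf2 ha) hc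

end Mehler

lemma phiFn_eq_sum_integral_sq_mehler {k m : ℕ} {L : Fin m → (Fin k → ℝ) → ℝ}
    (hL2 : ∀ r, MemLp (L r) 2 (gaussianPi (Fin k))) {t : ℝ} (ht : 0 ≤ t) :
    phiFn k m L t = ∑ r, ∫ x, mehler (exp (-t / 2)) (L r) x ^ 2 ∂gaussianPi (Fin k) := by
  have hexp : exp (-t) = exp (-t / 2) ^ 2 := by rw [← exp_nat_mul]; ring_nf
  have hρ : exp (-t / 2) ^ 2 ≤ 1 := by rw [← hexp]; exact exp_le_one_iff.2 (by linarith)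
  unfold phiFn
  simp only [hexp]
  exact Finset.sum_congr rfl fun r _ => integral_mul_comp_eq_integral_sq_mehler (hL2 r) hρ

theorem stmt14_general (k : ℕ) (m : ℕ)
    (L : Fin m → (Fin k → ℝ) → ℝ) (hLmeas : ∀ r, Measurable (L r))
    (hL2 : ∀ r, MemLp (L r) 2 (gaussianPi (Fin k)))
    (s t : ℝ) (hs : 0 ≤ s) (hst : s ≤ t) :
    0 ≤ phiFn k m L t ∧ phiFn k m L t ≤ phiFn k m L s := by
  rw [phiFn_eq_sum_integral_sq_mehler hL2 (hs.trans hst), phiFn_eq_sum_integral_sq_mehler hL2 hs]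
  refine ⟨sum_nonneg fun r _ => integral_nonneg fun x => sq_nonneg _,
    sum_le_sum fun r _ => ?_⟩
  have hsq_le_one : ∀ u, 0 ≤ u → exp (-u / 2) ^ 2 ≤ 1 := fun u hu =>
    pow_le_one₀ (exp_pos _).le (exp_le_one_iff.2 (by linarith))
  rw [show exp (-t / 2) = exp (-(t - s) / 2) * exp (-s / 2) by rw [← exp_add]; ring_nf]
  exact integral_sq_mehler_mul_le (hLmeas r) (hL2 r) (hsq_le_one s hs)
    (hsq_le_one (t - s) (by linarith))

/-- Monotonicity of `φ(t) = Σ_r E[L_r(J¹(t)) L_r(J²(t))]`: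
for `0 ≤ s ≤ t`, one has `0 ≤ φ(t) ≤ φ(s)`. -/
theorem stmt14 (k : ℕ) (hk : 1 ≤ k) (m : ℕ) (hm : 1 ≤ m)
    (L : Fin m → (Fin k → ℝ) → ℝ) (hLmeas : ∀ r, Measurable (L r))
    (hL2 : ∀ r, MemLp (L r) 2 (gaussianPi (Fin k)))
    (s t : ℝ) (hs : 0 ≤ s) (hst : s ≤ t) :
    0 ≤ phiFn k m L t ∧ phiFn k m L t ≤ phiFn k m L s :=
  stmt14_general k m L hLmeas hL2 s t hs hst
end
end
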